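/- With the bracket ⟨·⟩ and Z_i as above, for any nonempty sequence α = (α_1,...,α_m) of nonnegative integers with α_i > 0 for i > 1, the series F_{α_1,...,α_m} = ⟨exp(-Z_1) · Z_{α_1} ··· Z_{α_m}⟩ ∈ ℚ[[x]] is a polynomial in x of degree at most 1 + Σ_{i=1}^m α_i. -/

import Mathlib

/-!
On the `x^n`-coefficient the bracket only sees two gradings: a polynomial in the `t_j` all of
whose monomials have weight `∑ d_i = n` and `k` factors is sent to `n^(k-3)` times its value at
`t = 1`. Expanding `exp(-Z₁)`, the `x^n`-coefficient of `F_α` becomes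
`n^(m-3) [x^n] e^{-n Y₁} ∏ Y_{α_i}`, where `Y_i` is `Z_i` at `t = 1`.

`Y₁` is the tree function, the compositional inverse of `g(z) = z e^{-z}`, and Lagrange inversion
in the form `[x^n] H = [z^n] H(g(z)) (1 - z) e^{nz}` turns this into
`[z^n] (1 - z) ∏ Y_{α_i}(g(z))`.
Finally `[z^p] Y_a(g(z)) = Δ^p(r ↦ r^(p-a))(0) / p!` for `a < p`, so `Y_a ∘ g` is a polynomial of
degree at most `a` when `a ≥ 1`, while `(1 - z) Y₀(g(z)) = z`.
-/

/-- The value of the bracket on a monomial `∏ t_j ^ (m j)`: it is `1` on the constant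
monomial, and `(d₁+⋯+d_k)^(k-3)` on `t_{d₁}⋯t_{d_k}`, where `k` is the number of factors
(with multiplicity) and the `d_i` are the variable indices. -/
noncomputable def brval (m : ℕ →₀ ℕ) : ℚ :=
  if m = 0 then 1
  else (((m.sum fun j e => j * e : ℕ) : ℚ)) ^ (((m.sum fun _ e => e : ℕ) : ℤ) - 3)

/-- The bracket `⟨·⟩ : ℚ[t₁,t₂,…] → ℚ`, the linear functional with `⟨1⟩ = 1` and
`⟨t_{d₁}⋯t_{d_k}⟩ = (d₁+⋯+d_k)^(k-3)`. -/
noncomputable def bracket (f : MvPolynomial ℕ ℚ) : ℚ :=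
  ∑ m ∈ f.support, f.coeff m * brval m

/-- `Z_i(t,x) = ∑_{j ≥ 1} x^j t_j j^{j-i} / j!` as a power series in `x` with
coefficients in `ℚ[t]`. -/
noncomputable def Zser (i : ℕ) : PowerSeries (MvPolynomial ℕ ℚ) :=
  PowerSeries.mk fun j =>
    if j = 0 then 0
    else MvPolynomial.C (((j : ℚ) ^ ((j : ℤ) - (i : ℤ))) / (Nat.factorial j : ℚ)) *
      MvPolynomial.X j

/-- `exp(-Z) = ∑_k (-Z)^k / k!`, computed coefficientwise (well defined for `Z` with
vanishing constant term, since then `(Z^k)`'s `n`-th coefficient vanishes for `k > n`). -/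
noncomputable def expNeg (Z : PowerSeries (MvPolynomial ℕ ℚ)) :
    PowerSeries (MvPolynomial ℕ ℚ) :=
  PowerSeries.mk fun n => ∑ k ∈ Finset.range (n + 1),
    MvPolynomial.C ((-1 : ℚ) ^ k / (Nat.factorial k : ℚ)) * PowerSeries.coeff n (Z ^ k)

/-- The `x`-linear extension of the bracket to `ℚ[t][[x]] → ℚ[[x]]`. -/
noncomputable def bracketSeries (F : PowerSeries (MvPolynomial ℕ ℚ)) : PowerSeries ℚ :=
  PowerSeries.mk fun n => bracket (PowerSeries.coeff n F)

open PowerSeries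

noncomputable def bracketₗ : MvPolynomial ℕ ℚ →ₗ[ℚ] ℚ :=
  Finsupp.linearCombination ℚ brval ∘ₗ (AddMonoidAlgebra.coeffLinearEquiv ℚ).toLinearMap

lemma bracketₗ_apply (f : MvPolynomial ℕ ℚ) : bracketₗ f = bracket f := rfl

def bidegree (j : ℕ) : ℕ × ℕ := (j, 1)

lemma weight_bidegree (d : ℕ →₀ ℕ) :
    Finsupp.weight bidegree d = (d.sum fun j e => j * e, d.sum fun _ e => e) := by
  ext <;> simp [Finsupp.weight_apply, Finsupp.sum, Prod.fst_sum, Prod.snd_sum, bidegree,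
    mul_comm]

lemma brval_of_weight_eq {d : ℕ →₀ ℕ} {n D : ℕ} (hn : n ≠ 0)
    (hd : Finsupp.weight bidegree d = (n, D)) : brval d = (n : ℚ) ^ ((D : ℤ) - 3) := by
  rw [weight_bidegree, Prod.mk.injEq] at hd
  have hd0 : d ≠ 0 := by
    rintro rfl
    exact hn (by simpa using hd.1.symm)
  rw [brval, if_neg hd0, hd.1, hd.2]

lemma bracket_eq_of_isWeightedHomogeneous {f : MvPolynomial ℕ ℚ} {n D : ℕ} (hn : n ≠ 0)
    (hf : f.IsWeightedHomogeneous bidegree (n, D)) :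
    bracket f = (n : ℚ) ^ ((D : ℤ) - 3) * MvPolynomial.eval (fun _ => 1) f := by
  rw [bracket, MvPolynomial.eval_eq, Finset.mul_sum]
  refine Finset.sum_congr rfl fun d hd => ?_
  rw [brval_of_weight_eq hn (hf (MvPolynomial.mem_support_iff.mp hd))]
  simp [mul_comm]

section Bihomogeneous

variable {σ R : Type*} [CommSemiring R] (w : σ → ℕ × ℕ)

def HasBihomogeneousCoeffs (F : PowerSeries (MvPolynomial σ R)) (D : ℕ) : Prop :=
  ∀ j, (coeff j F).IsWeightedHomogeneous w (j, D)

variable {w}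

lemma hasBihomogeneousCoeffs_one :
    HasBihomogeneousCoeffs w (1 : PowerSeries (MvPolynomial σ R)) 0 := by
  intro j
  rw [coeff_one]
  split_ifs with h
  · subst h
    exact MvPolynomial.isWeightedHomogeneous_one R w
  · exact MvPolynomial.isWeightedHomogeneous_zero R w _

lemma HasBihomogeneousCoeffs.mul {F G : PowerSeries (MvPolynomial σ R)} {D E : ℕ}
    (hF : HasBihomogeneousCoeffs w F D) (hG : HasBihomogeneousCoeffs w G E) :
    HasBihomogeneousCoeffs w (F * G) (D + E) := by
  intro n
  rw [coeff_mul]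
  refine MvPolynomial.IsWeightedHomogeneous.sum _ _ _ fun x hx => ?_
  convert (hF x.1).mul (hG x.2) using 1
  rw [← Finset.HasAntidiagonal.mem_antidiagonal.mp hx]
  rfl

lemma HasBihomogeneousCoeffs.pow {F : PowerSeries (MvPolynomial σ R)} {D : ℕ}
    (hF : HasBihomogeneousCoeffs w F D) (k : ℕ) : HasBihomogeneousCoeffs w (F ^ k) (k * D) := by
  induction k with
  | zero => simpa using hasBihomogeneousCoeffs_one
  | succ k ih => simpa [pow_succ, add_mul] using ih.mul hF

lemma HasBihomogeneousCoeffs.prod {ι : Type*} (s : Finset ι)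
    {F : ι → PowerSeries (MvPolynomial σ R)} {D : ι → ℕ}
    (hF : ∀ i ∈ s, HasBihomogeneousCoeffs w (F i) (D i)) :
    HasBihomogeneousCoeffs w (∏ i ∈ s, F i) (∑ i ∈ s, D i) := by
  classical
  induction s using Finset.induction_on with
  | empty => simpa using hasBihomogeneousCoeffs_one
  | insert a s ha ih =>
    rw [Finset.prod_insert ha, Finset.sum_insert ha]
    exact (hF a (Finset.mem_insert_self a s)).mul
      (ih fun i hi => hF i (Finset.mem_insert_of_mem hi))

end Bihomogeneous

lemma hasBihomogeneousCoeffs_Zser (i : ℕ) : HasBihomogeneousCoeffs bidegree (Zser i) 1 := by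
  intro j
  rw [Zser, coeff_mk]
  split_ifs
  · exact MvPolynomial.isWeightedHomogeneous_zero ℚ _ _
  · simpa [bidegree] using (MvPolynomial.isWeightedHomogeneous_C bidegree _).mul
      (MvPolynomial.isWeightedHomogeneous_X ℚ bidegree j)

lemma constantCoeff_Zser (i : ℕ) : constantCoeff (Zser i) = 0 := by
  rw [← coeff_zero_eq_constantCoeff_apply, Zser, coeff_mk, if_pos rfl]

lemma coeff_subst_mul_eq_sum {R S : Type*} [CommRing R] [CommRing S] [Algebra R S]
    {g : S⟦X⟧} (hg : constantCoeff g = 0) (H : R⟦X⟧) (B : S⟦X⟧) (n : ℕ) :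
    coeff n (H.subst g * B) = ∑ k ∈ Finset.range (n + 1), coeff k H • coeff n (g ^ k * B) := by
  have hsub : HasSubst g := HasSubst.of_constantCoeff_zero' hg
  have htail : ∀ T : R⟦X⟧, coeff n ((X ^ (n + 1) * T).subst g * B) = 0 := by
    intro T
    have hdvd : (X : S⟦X⟧) ^ (n + 1) ∣ (X ^ (n + 1) * T).subst g * B := by
      rw [subst_mul hsub, subst_pow hsub, subst_X hsub, mul_assoc]
      exact Dvd.dvd.mul_right (pow_dvd_pow_of_dvd (X_dvd_iff.mpr hg) _) _
    exact X_pow_dvd_iff.mp hdvd n (Nat.lt_succ_self n)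
  conv_lhs => rw [eq_X_pow_mul_shift_add_trunc (n + 1) H]
  rw [subst_add hsub, add_mul, map_add, htail, zero_add, subst_coe hsub,
    Polynomial.aeval_eq_sum_range' (natDegree_trunc_lt H n), Finset.sum_mul, map_sum]
  refine Finset.sum_congr rfl fun k hk => ?_
  rw [coeff_trunc, if_pos (Finset.mem_range.mp hk), smul_mul_assoc, coeff_smul]

lemma coeff_subst_eq_sum {R S : Type*} [CommRing R] [CommRing S] [Algebra R S]
    {g : S⟦X⟧} (hg : constantCoeff g = 0) (H : R⟦X⟧) (n : ℕ) :
    coeff n (H.subst g) = ∑ k ∈ Finset.range (n + 1), coeff k H • coeff n (g ^ k) := by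
  simpa using coeff_subst_mul_eq_sum hg H 1 n

lemma expNeg_eq_subst {Z : PowerSeries (MvPolynomial ℕ ℚ)} (hZ : constantCoeff Z = 0) :
    expNeg Z = (rescale (-1 : ℚ) (exp ℚ)).subst Z := by
  refine PowerSeries.ext fun n => ?_
  rw [expNeg, coeff_mk, coeff_subst_eq_sum hZ]
  refine Finset.sum_congr rfl fun k _ => ?_
  rw [coeff_rescale, coeff_exp, MvPolynomial.C_mul']
  congr 1
  simp [div_eq_mul_inv]

noncomputable def xExpNegX : ℚ⟦X⟧ := X * rescale (-1 : ℚ) (exp ℚ)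

lemma constantCoeff_xExpNegX : constantCoeff xExpNegX = 0 := by
  simp [xExpNegX]

lemma xExpNegX_pow (k : ℕ) : xExpNegX ^ k = X ^ k * rescale (-k : ℚ) (exp ℚ) := by
  rw [xExpNegX, mul_pow, ← map_pow, exp_pow_eq_rescale_exp, rescale_rescale, mul_neg_one]

/-- The factor `g'(z) (z / g(z)) ^ (n + 1) = (1 - z) e^{nz}` in Lagrange's formula
`[x^n] H(x) = [z^n] H(g(z)) g'(z) (z / g(z)) ^ (n + 1)` for `g(z) = z e^{-z}`. -/
noncomputable def lagrangeFactor (n : ℕ) : ℚ⟦X⟧ := (1 - X) * rescale (n : ℚ) (exp ℚ)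

lemma coeff_lagrangeFactor_self (c : ℕ) :
    coeff c (lagrangeFactor c) = if c = 0 then 1 else 0 := by
  cases c with
  | zero => simp [lagrangeFactor]
  | succ d =>
    rw [lagrangeFactor, sub_mul, one_mul, map_sub, coeff_succ_X_mul, coeff_rescale, coeff_rescale,
      coeff_exp, coeff_exp, Nat.factorial_succ]
    simp only [Algebra.algebraMap_self, RingHom.id_apply, Nat.cast_mul, Nat.cast_succ, pow_succ]
    field_simp
    simp

lemma xExpNegX_pow_mul_lagrangeFactor (k c : ℕ) :
    xExpNegX ^ k * lagrangeFactor (k + c) = X ^ k * lagrangeFactor c := by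
  rw [xExpNegX_pow, lagrangeFactor, lagrangeFactor, mul_assoc, mul_left_comm _ (1 - X),
    exp_mul_exp_eq_exp_add]
  push_cast
  ring_nf

lemma coeff_xExpNegX_pow_mul_lagrangeFactor {k n : ℕ} (hkn : k ≤ n) :
    coeff n (xExpNegX ^ k * lagrangeFactor n) = if k = n then 1 else 0 := by
  obtain ⟨c, rfl⟩ := Nat.exists_eq_add_of_le hkn
  rw [xExpNegX_pow_mul_lagrangeFactor, coeff_X_pow_mul', if_pos hkn, Nat.add_sub_cancel_left,
    coeff_lagrangeFactor_self]
  simp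

lemma coeff_subst_xExpNegX_mul_lagrangeFactor (H : ℚ⟦X⟧) (n : ℕ) :
    coeff n (H.subst xExpNegX * lagrangeFactor n) = coeff n H := by
  rw [coeff_subst_mul_eq_sum constantCoeff_xExpNegX, Finset.sum_eq_single_of_mem n
    (Finset.self_mem_range_succ n), coeff_xExpNegX_pow_mul_lagrangeFactor le_rfl, if_pos rfl,
    smul_eq_mul, mul_one]
  intro k hk hkn
  rw [coeff_xExpNegX_pow_mul_lagrangeFactor (Nat.lt_succ_iff.mp (Finset.mem_range.mp hk)),
    if_neg hkn, smul_zero]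

noncomputable def Yser (i : ℕ) : ℚ⟦X⟧ := map (MvPolynomial.eval fun _ => (1 : ℚ)) (Zser i)

lemma coeff_Yser (i j : ℕ) :
    coeff j (Yser i) = if j = 0 then 0 else (j : ℚ) ^ ((j : ℤ) - i) / j.factorial := by
  rw [Yser, coeff_map, Zser, coeff_mk]
  split_ifs <;> simp

lemma constantCoeff_Yser (i : ℕ) : constantCoeff (Yser i) = 0 := by
  rw [← coeff_zero_eq_constantCoeff_apply, coeff_Yser, if_pos rfl]

lemma coeff_xExpNegX_pow {l p : ℕ} (hlp : l ≤ p) :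
    coeff p (xExpNegX ^ l) = (-l : ℚ) ^ (p - l) / (p - l).factorial := by
  rw [xExpNegX_pow, coeff_X_pow_mul', if_pos hlp, coeff_rescale, coeff_exp]
  simp [div_eq_mul_inv]

lemma coeff_Yser_subst {a p : ℕ} (hap : a < p) :
    coeff p ((Yser a).subst xExpNegX) =
      (fwdDiff 1)^[p] (fun r : ℚ => r ^ (p - a)) 0 / p.factorial := by
  rw [coeff_subst_eq_sum constantCoeff_xExpNegX, fwdDiff_iter_eq_sum_shift, Finset.sum_div]
  refine Finset.sum_congr rfl fun l hl => ?_
  have hlp : l ≤ p := Nat.lt_succ_iff.mp (Finset.mem_range.mp hl)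
  rw [coeff_Yser, coeff_xExpNegX_pow hlp, zero_add, nsmul_one, zsmul_eq_mul]
  split_ifs with hl0
  · simp [hl0, zero_pow (Nat.sub_ne_zero_of_lt hap)]
  · have hl : (l : ℚ) ≠ 0 := Nat.cast_ne_zero.mpr hl0
    have hpow : (l : ℚ) ^ ((l : ℤ) - a) * l ^ (p - l) = l ^ (p - a) := by
      rw [← zpow_natCast, ← zpow_natCast, ← zpow_add₀ hl]
      congr 1
      omega
    push_cast
    rw [Nat.cast_choose ℚ hlp, neg_pow, smul_eq_mul]
    field_simp
    rw [← hpow]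

lemma Yser_one_subst : (Yser 1).subst xExpNegX = X := by
  refine PowerSeries.ext fun p => ?_
  rcases p with _ | _ | p
  · simp [coeff_subst_eq_sum constantCoeff_xExpNegX, coeff_Yser]
  · rw [coeff_subst_eq_sum constantCoeff_xExpNegX, Finset.sum_range_succ, Finset.sum_range_one]
    simp [coeff_Yser, xExpNegX, coeff_succ_X_mul]
  · rw [coeff_Yser_subst (by omega), fwdDiff_iter_pow_eq_zero_of_lt (by omega), coeff_X]
    simp

lemma Yser_zero_subst : (Yser 0).subst xExpNegX = X * mk 1 := by
  refine PowerSeries.ext fun p => ?_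
  rcases p with _ | p
  · simp [coeff_subst_eq_sum constantCoeff_xExpNegX, coeff_Yser]
  · rw [coeff_Yser_subst (Nat.succ_pos p), Nat.sub_zero, fwdDiff_iter_eq_factorial,
      coeff_succ_X_mul]
    simp [Nat.factorial_ne_zero]

lemma one_sub_X_mul_Yser_zero_subst : (1 - X) * (Yser 0).subst xExpNegX = X := by
  rw [Yser_zero_subst, mul_left_comm, mul_comm (1 - X), mk_one_mul_one_sub_eq_one, mul_one]

lemma coeff_Yser_subst_eq_zero {a p : ℕ} (ha : 1 ≤ a) (hap : a < p) :
    coeff p ((Yser a).subst xExpNegX) = 0 := by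
  rw [coeff_Yser_subst hap, fwdDiff_iter_pow_eq_zero_of_lt (by omega)]
  simp

lemma coeff_bracketSeries_expNeg_mul_prod {m n : ℕ} (hn : n ≠ 0) (α : Fin m → ℕ) :
    coeff n (bracketSeries (expNeg (Zser 1) * ∏ i, Zser (α i))) =
      (n : ℚ) ^ ((m : ℤ) - 3) *
        coeff n ((rescale (-n : ℚ) (exp ℚ)).subst (Yser 1) * ∏ i, Yser (α i)) := by
  rw [bracketSeries, coeff_mk, expNeg_eq_subst (constantCoeff_Zser 1),
    coeff_subst_mul_eq_sum (constantCoeff_Zser 1), ← bracketₗ_apply, map_sum,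
    coeff_subst_mul_eq_sum (constantCoeff_Yser 1), Finset.mul_sum]
  refine Finset.sum_congr rfl fun k _ => ?_
  have hhom := ((hasBihomogeneousCoeffs_Zser 1).pow k).mul
    (HasBihomogeneousCoeffs.prod Finset.univ fun i _ => hasBihomogeneousCoeffs_Zser (α i)) n
  have heval : MvPolynomial.eval (fun _ => (1 : ℚ)) (coeff n (Zser 1 ^ k * ∏ i, Zser (α i))) =
      coeff n (Yser 1 ^ k * ∏ i, Yser (α i)) := by
    rw [← coeff_map, map_mul, map_pow, map_prod]
    rfl
  have hn' : (n : ℚ) ≠ 0 := Nat.cast_ne_zero.mpr hn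
  rw [map_smul, bracketₗ_apply, bracket_eq_of_isWeightedHomogeneous hn hhom, heval,
    coeff_rescale, coeff_rescale, coeff_exp]
  simp only [Finset.sum_const, Finset.card_univ, Fintype.card_fin, smul_eq_mul, mul_one,
    Algebra.algebraMap_self, RingHom.id_apply]
  rw [show ((k + m : ℕ) : ℤ) - 3 = k + ((m : ℤ) - 3) by push_cast; ring, zpow_add₀ hn',
    zpow_natCast, neg_pow (n : ℚ)]
  ring

lemma coeff_rescale_exp_subst_Yser_one_mul (P : ℚ⟦X⟧) (n : ℕ) :
    coeff n ((rescale (-n : ℚ) (exp ℚ)).subst (Yser 1) * P) =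
      coeff n ((1 - X) * P.subst xExpNegX) := by
  have hY : HasSubst (Yser 1) := HasSubst.of_constantCoeff_zero' (constantCoeff_Yser 1)
  have hg : HasSubst xExpNegX := HasSubst.of_constantCoeff_zero' constantCoeff_xExpNegX
  rw [← coeff_subst_xExpNegX_mul_lagrangeFactor, subst_mul hg, subst_comp_subst_apply hY hg,
    Yser_one_subst, X_subst]
  congr 1
  calc rescale (-n : ℚ) (exp ℚ) * P.subst xExpNegX * lagrangeFactor n
      = (1 - X) * P.subst xExpNegX * (rescale (-n : ℚ) (exp ℚ) * rescale (n : ℚ) (exp ℚ)) := by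
        rw [lagrangeFactor]
        ring
    _ = (1 - X) * P.subst xExpNegX := by
        rw [exp_mul_exp_eq_exp_add, neg_add_cancel, rescale_zero]
        simp

lemma exists_coe_eq_of_coeff_eq_zero {R : Type*} [Semiring R] {F : R⟦X⟧} {d : ℕ}
    (h : ∀ n, d < n → coeff n F = 0) : ∃ q : Polynomial R, q.natDegree ≤ d ∧ (q : R⟦X⟧) = F := by
  refine ⟨trunc (d + 1) F, Nat.lt_succ_iff.mp (natDegree_trunc_lt F d), ?_⟩
  ext n
  rw [Polynomial.coeff_coe, coeff_trunc]
  split_ifs with hn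
  · rfl
  · exact (h n (by omega)).symm

lemma exists_coe_eq_Yser_subst {a : ℕ} (ha : 1 ≤ a) :
    ∃ q : Polynomial ℚ, q.natDegree ≤ a ∧ (q : ℚ⟦X⟧) = (Yser a).subst xExpNegX :=
  exists_coe_eq_of_coeff_eq_zero fun _ hp => coeff_Yser_subst_eq_zero ha hp

lemma exists_coe_eq_one_sub_X_mul_Yser_subst (a : ℕ) :
    ∃ q : Polynomial ℚ, q.natDegree ≤ 1 + a ∧
      (q : ℚ⟦X⟧) = (1 - X) * (Yser a).subst xExpNegX := by
  rcases Nat.eq_zero_or_pos a with rfl | ha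
  · exact ⟨Polynomial.X, Polynomial.natDegree_X_le, by
      rw [Polynomial.coe_X, one_sub_X_mul_Yser_zero_subst]⟩
  · obtain ⟨q, hq, hqY⟩ := exists_coe_eq_Yser_subst ha
    refine ⟨(1 - Polynomial.X) * q, ?_, by rw [Polynomial.coe_mul, hqY]; simp⟩
    refine Polynomial.natDegree_mul_le.trans (add_le_add ?_ hq)
    compute_degree!

lemma exists_coe_eq_one_sub_X_mul_prod_Yser_subst {m : ℕ} (α : Fin (m + 1) → ℕ)
    (hα : ∀ i : Fin m, 1 ≤ α i.succ) :
    ∃ q : Polynomial ℚ, q.natDegree ≤ 1 + ∑ i, α i ∧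
      (q : ℚ⟦X⟧) = (1 - X) * (∏ i, Yser (α i)).subst xExpNegX := by
  obtain ⟨q₀, hq₀, h₀⟩ := exists_coe_eq_one_sub_X_mul_Yser_subst (α 0)
  choose q hq h using fun i : Fin m => exists_coe_eq_Yser_subst (hα i)
  refine ⟨q₀ * ∏ i, q i, ?_, ?_⟩
  · refine Polynomial.natDegree_mul_le.trans ?_
    grw [Polynomial.natDegree_prod_le, Fin.sum_univ_succ, hq₀, Finset.sum_le_sum fun i _ => hq i]
    omega
  · have hg : HasSubst xExpNegX := HasSubst.of_constantCoeff_zero' constantCoeff_xExpNegX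
    rw [← coe_substAlgHom hg, map_prod, coe_substAlgHom hg, Fin.prod_univ_succ, ← mul_assoc,
      ← h₀, Polynomial.coe_mul]
    congr 1
    rw [← Polynomial.coeToPowerSeries.ringHom_apply, map_prod]
    exact Finset.prod_congr rfl fun i _ => h i

/-- Lemma 2 of the paper: for a nonempty sequence `α = (α₁,…,α_m)` of nonnegative
integers with `α_i > 0` for `i > 1`, the series
`F_{α₁,…,α_m} = ⟨exp(-Z₁)·Z_{α₁}⋯Z_{α_m}⟩` is a polynomial in `x` of degree at most
`1 + ∑ α_i`. -/
theorem stmt_3 (m : ℕ) (hm : 0 < m) (α : Fin m → ℕ)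
    (hα : ∀ i : Fin m, 0 < (i : ℕ) → 0 < α i) :
    ∀ n : ℕ, 1 + ∑ i, α i < n →
      PowerSeries.coeff n (bracketSeries (expNeg (Zser 1) * ∏ i, Zser (α i))) = 0 := by
  obtain ⟨k, rfl⟩ : ∃ k, m = k + 1 := ⟨m - 1, by omega⟩
  intro n hn
  obtain ⟨q, hq, hqY⟩ :=
    exists_coe_eq_one_sub_X_mul_prod_Yser_subst α fun i => hα i.succ i.succ_pos
  rw [coeff_bracketSeries_expNeg_mul_prod (by omega), coeff_rescale_exp_subst_Yser_one_mul, ← hqY,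
    Polynomial.coeff_coe, Polynomial.coeff_eq_zero_of_natDegree_lt (by omega), mul_zero]
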